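/- arXiv:1610.04105 — 5 statements merged into one kernel-verified Lean document; each statement's English description precedes it below -/
import Mathlib

section
/- Let H be a Hopf algebra, A ⊆ H a right coideal subalgebra that is invariant under the right adjoint action of H (i.e. S(x₁) a x₂ ∈ A for all a ∈ A, x ∈ H), and B ⊆ H any right coideal subalgebra. Then the linear span BA = span{ba | a ∈ A, b ∈ B} is again a right coideal subalgebra of H; in particular it is closed under multiplication. -/
open TensorProduct

variable {k H : Type*}

/-- The bilinear map `u ⊗ v ↦ u * a * v` on the tensor square of an algebra. -/
noncomputable def sandwichMul [CommSemiring k] [Semiring H] [Algebra k H] (a : H) :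
    H ⊗[k] H →ₗ[k] H :=
  TensorProduct.lift <|
    LinearMap.mk₂ k (fun u v => u * a * v)
      (fun u u' v => by (try simp only []); rw [add_mul, add_mul])
      (fun c u v => by (try simp only []); rw [smul_mul_assoc, smul_mul_assoc])
      (fun u v v' => by (try simp only []); rw [mul_add])
      (fun c u v => by (try simp only []); rw [mul_smul_comm])

/-- The right adjoint action `a ◁ x = S(x₁) a x₂` of a Hopf algebra on itself. -/
noncomputable def rightAdjointAction [CommSemiring k] [Semiring H] [HopfAlgebra k H]
    (a x : H) : H :=
  sandwichMul (k := k) a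
    (TensorProduct.map (HopfAlgebra.antipode (R := k)) LinearMap.id (Coalgebra.comul x))

/-- A subalgebra `A ⊆ H` is a right coideal subalgebra if `Δ(A) ⊆ A ⊗ H`. -/
def IsRightCoidealSubalgebra [CommSemiring k] [Semiring H] [Bialgebra k H]
    (A : Subalgebra k H) : Prop :=
  ∀ a ∈ A, Coalgebra.comul (R := k) a ∈
    LinearMap.range (TensorProduct.map (Subalgebra.toSubmodule A).subtype
      (LinearMap.id (R := k) (M := H)))

/-!
The span `BA` is the submodule product `B * A`. Because `a b = b₁ (S(b₂) a b₃)` and `A` is stable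
under the right adjoint action, `A * B ≤ B * A`; hence `(B A)(B A) ≤ B B A A = B A`. Since `Δ` is
multiplicative, a product of right coideals is again a right coideal.
-/

open Coalgebra HopfAlgebra LinearMap TensorProduct Submodule

noncomputable def rightAdjointActionₗ [CommSemiring k] [Semiring H] [HopfAlgebra k H] (a : H) :
    H →ₗ[k] H :=
  sandwichMul a ∘ₗ map (antipode k) id ∘ₗ comul

theorem mul'_lTensor_rightAdjointActionₗ_comul [CommSemiring k] [Semiring H] [HopfAlgebra k H]
    (a x : H) : mul' k H ((rightAdjointActionₗ a).lTensor H (comul x)) = a * x := by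
  have reassoc : mul' k H ∘ₗ (sandwichMul a ∘ₗ map (antipode k) id).lTensor H ∘ₗ
        (TensorProduct.assoc k H H H).toLinearMap =
      sandwichMul a ∘ₗ (mul' k H ∘ₗ (antipode k).lTensor H).rTensor H :=
    TensorProduct.ext_threefold fun u v w => by simp [sandwichMul, mul_assoc]
  -- in Sweedler notation: `x₁ S(x₂) a x₃ = ε(x₁) a x₂ = a x`
  calc mul' k H ((rightAdjointActionₗ a).lTensor H (comul x))
      = (mul' k H ∘ₗ (sandwichMul a ∘ₗ map (antipode k) id).lTensor H ∘ₗ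
          (TensorProduct.assoc k H H H).toLinearMap) ((comul (R := k)).rTensor H (comul x)) := by
        simp [rightAdjointActionₗ, lTensor_comp_apply, coassoc_apply]
    _ = sandwichMul a ((mul' k H ∘ₗ (antipode k).lTensor H ∘ₗ comul).rTensor H (comul x)) := by
        rw [reassoc, comp_apply]
        simp only [rTensor_comp_apply]
    _ = a * x := by
        rw [mul_antipode_lTensor_comul, rTensor_comp_apply, rTensor_counit_comul]
        simp [sandwichMul]

section Coideal

variable [CommSemiring k]

def IsRightCoideal [AddCommMonoid H] [Module k H] [Coalgebra k H] (M : Submodule k H) : Prop :=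
  ∀ x ∈ M, comul (R := k) x ∈ range (M.subtype.rTensor H)

theorem range_rTensor_subtype_mul_le {S T : Type*} [Semiring S] [Algebra k S] [Semiring T]
    [Algebra k T] (M N : Submodule k S) :
    range (M.subtype.rTensor T) * range (N.subtype.rTensor T) ≤
      range ((M * N).subtype.rTensor T) := by
  simp only [rTensor, range_map_eq_span_tmul, span_mul_span, span_le]
  rintro _ ⟨_, ⟨m, x, rfl⟩, _, ⟨n, y, rfl⟩, rfl⟩
  exact subset_span ⟨⟨m * n, mul_mem_mul m.2 n.2⟩, x * y, by simp⟩

theorem IsRightCoideal.mul [Semiring H] [Bialgebra k H] {M N : Submodule k H}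
    (hM : IsRightCoideal M) (hN : IsRightCoideal N) : IsRightCoideal (M * N) := by
  intro x hx
  refine Submodule.mul_induction_on hx (fun m hm n hn => ?_) fun x y hx hy => ?_
  · rw [Bialgebra.comul_mul]
    exact range_rTensor_subtype_mul_le M N (mul_mem_mul (hM m hm) (hN n hn))
  · rw [map_add]
    exact add_mem hx hy

theorem mul'_map_subtype_mem_mul {S P : Type*} [Semiring S] [Algebra k S] [AddCommMonoid P]
    [Module k P] {M N : Submodule k S} {f : P →ₗ[k] S} (hf : ∀ p, f p ∈ N) (t : M ⊗[k] P) :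
    mul' k S (map M.subtype f t) ∈ M * N := by
  induction t using TensorProduct.induction_on with
  | zero => simp
  | tmul m p => exact mul_mem_mul m.2 (hf p)
  | add t t' ht ht' => rw [map_add, map_add]; exact add_mem ht ht'

end Coideal

theorem toSubmodule_mul_le_of_rightAdjointAction_mem [CommSemiring k] [Semiring H]
    [HopfAlgebra k H] {A B : Subalgebra k H} (hB : IsRightCoidealSubalgebra B)
    (hAd : ∀ a ∈ A, ∀ x : H, rightAdjointAction (k := k) a x ∈ A) :
    Subalgebra.toSubmodule A * Subalgebra.toSubmodule B ≤
      Subalgebra.toSubmodule B * Subalgebra.toSubmodule A := by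
  refine mul_le.mpr fun a ha b hb => ?_
  obtain ⟨t, ht⟩ := hB b hb
  rw [← mul'_lTensor_rightAdjointActionₗ_comul (k := k) a b, ← ht, ← comp_apply (lTensor H _),
    lTensor_comp_map, comp_id]
  exact mul'_map_subtype_mem_mul (hAd a ha) t

/-- If `A` is a right coideal subalgebra invariant under the right adjoint action and
`B` is any right coideal subalgebra, then `BA = span{ba}` is again a right coideal
subalgebra; in particular it is closed under multiplication (and contains `1`). -/
theorem span_mul_isRightCoidealSubalgebra [Field k] [Ring H] [HopfAlgebra k H]
    (A B : Subalgebra k H)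
    (hA : IsRightCoidealSubalgebra A) (hB : IsRightCoidealSubalgebra B)
    (hAd : ∀ a ∈ A, ∀ x : H, rightAdjointAction (k := k) a x ∈ A) :
    let BA : Submodule k H := Submodule.span k {y : H | ∃ b ∈ B, ∃ a ∈ A, y = b * a}
    (1 : H) ∈ BA ∧ (∀ x ∈ BA, ∀ y ∈ BA, x * y ∈ BA) ∧
      ∀ x ∈ BA, Coalgebra.comul (R := k) x ∈
        LinearMap.range (TensorProduct.map BA.subtype
          (LinearMap.id (R := k) (M := H))) := by
  intro BA
  set A' := Subalgebra.toSubmodule A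
  set B' := Subalgebra.toSubmodule B
  have hBA : BA = B' * A' := by
    rw [mul_eq_span_mul_set]
    refine congrArg (span k) ?_
    ext y
    simp [Set.mem_mul, eq_comm, A', B']
  have hmul : (B' * A') * (B' * A') ≤ B' * A' := calc
    (B' * A') * (B' * A') = B' * (A' * B') * A' := by simp only [mul_assoc]
    _ ≤ B' * (B' * A') * A' := by
      gcongr B' * ?_ * A'
      exact toSubmodule_mul_le_of_rightAdjointAction_mem hB hAd
    _ = (B' * B') * (A' * A') := by simp only [mul_assoc]
    _ = B' * A' := by rw [B.isIdempotentElem_toSubmodule.eq, A.isIdempotentElem_toSubmodule.eq]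
  rw [hBA]
  refine ⟨?_, fun x hx y hy => hmul (mul_mem_mul hx hy), IsRightCoideal.mul hB hA⟩
  simpa using mul_mem_mul (M := B') (N := A') B.one_mem A.one_mem
end

section
/- Let G be a topological group, H ≤ G a closed subgroup, and N ⊴ G a closed normal subgroup. Suppose that for every closed subset F ⊆ H that is invariant under right multiplication by H ∩ N, the product set FN is closed in G. Then the canonical continuous group homomorphism H/(H ∩ N) → (closure of HN)/N is a topological group isomorphism (a homeomorphic isomorphism). -/
open Pointwise

/-!
Applied to `F = H`, the hypothesis says that `HN` is closed, so the closure of `HN` is `HN`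
itself and the canonical map `H/(H ∩ N) → HN/N` is a continuous bijective homomorphism. It is
also a closed map: the preimage in `HN` of the image of a closed set `C` is `F N`, where the
preimage `F ⊆ H` of `C` is closed and invariant under right multiplication by `H ∩ N`.
-/

namespace QuotientGroup

variable {G : Type*} [Group G] {N H K : Subgroup G} [N.Normal]

theorem quotientMapSubgroupOfOfLe_injective (hHK : H ≤ K) :
    Function.Injective (quotientMapSubgroupOfOfLe (le_refl N) hHK) := by
  refine (injective_iff_map_eq_one _).mpr fun x hx => ?_
  induction x using QuotientGroup.induction_on with
  | H h =>
    rw [quotientMapSubgroupOfOfLe_mk, eq_one_iff] at hx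
    exact (eq_one_iff h).mpr hx

theorem quotientMapSubgroupOfOfLe_surjective (hHK : H ≤ K) (hKHN : K ≤ H ⊔ N) :
    Function.Surjective (quotientMapSubgroupOfOfLe (le_refl N) hHK) := by
  intro x
  induction x using QuotientGroup.induction_on with
  | H k =>
    have hk : (k : G) ∈ (H : Set G) * N := Subgroup.mul_normal H N ▸ hKHN k.2
    obtain ⟨h, hh, n, hn, hhn⟩ := hk
    refine ⟨(⟨h, hh⟩ : H), ?_⟩
    rw [quotientMapSubgroupOfOfLe_mk, QuotientGroup.eq]
    show h⁻¹ * k ∈ N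
    simpa [← hhn] using hn

theorem preimage_image_quotientMapSubgroupOfOfLe (hHK : H ≤ K) (C : Set (H ⧸ N.subgroupOf H)) :
    ((↑) : K → K ⧸ N.subgroupOf K) ⁻¹' (quotientMapSubgroupOfOfLe (le_refl N) hHK '' C) =
      (↑) ⁻¹' ((↑) '' (((↑) : H → H ⧸ N.subgroupOf H) ⁻¹' C) * (N : Set G)) := by
  ext k
  constructor
  · rintro ⟨c, hc, hck⟩
    induction c using QuotientGroup.induction_on with
    | H h =>
      rw [quotientMapSubgroupOfOfLe_mk, QuotientGroup.eq] at hck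
      exact ⟨h, ⟨h, hc, rfl⟩, (h : G)⁻¹ * k, hck, mul_inv_cancel_left _ _⟩
  · rintro ⟨_, ⟨h, hh, rfl⟩, n, hn, hhn⟩
    refine ⟨h, hh, ?_⟩
    rw [quotientMapSubgroupOfOfLe_mk, QuotientGroup.eq]
    show (h : G)⁻¹ * k ∈ N
    simpa [← hhn] using hn

variable [TopologicalSpace G]

theorem continuous_quotientMapSubgroupOfOfLe (hHK : H ≤ K) :
    Continuous (quotientMapSubgroupOfOfLe (le_refl N) hHK) :=
  (isQuotientMap_mk _).continuous_iff.mpr <|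
    continuous_mk.comp (continuous_inclusion hHK)

theorem isClosedMap_quotientMapSubgroupOfOfLe (hHK : H ≤ K) (hH : IsClosed (H : Set G))
    (hcl : ∀ F : Set G, F ⊆ (H : Set G) → IsClosed F →
      (∀ f ∈ F, ∀ n ∈ H ⊓ N, f * n ∈ F) → IsClosed (F * (N : Set G))) :
    IsClosedMap (quotientMapSubgroupOfOfLe (le_refl N) hHK) := by
  intro C hC
  rw [← (isQuotientMap_mk _).isClosed_preimage, preimage_image_quotientMapSubgroupOfOfLe]
  refine (hcl _ ?_ ?_ ?_).preimage continuous_subtype_val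
  · exact Subtype.coe_image_subset _ _
  · exact hH.isClosedEmbedding_subtypeVal.isClosedMap _ (hC.preimage continuous_mk)
  · rintro _ ⟨h, hh, rfl⟩ n ⟨hnH, hnN⟩
    refine ⟨h * ⟨n, hnH⟩, ?_, rfl⟩
    rwa [Set.mem_preimage, mk_mul, (eq_one_iff (⟨n, hnH⟩ : H)).mpr hnN, mul_one]

end QuotientGroup

theorem second_iso_topological_of_closed_products_general
    {G : Type*} [Group G] [TopologicalSpace G] [IsTopologicalGroup G]
    (H N : Subgroup G) [N.Normal] (hH : IsClosed (H : Set G))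
    (hcl : ∀ F : Set G, F ⊆ (H : Set G) → IsClosed F →
      (∀ f ∈ F, ∀ n ∈ H ⊓ N, f * n ∈ F) → IsClosed (F * (N : Set G))) :
    ∃ φ : (H ⧸ N.subgroupOf H) ≃*
        ((H ⊔ N).topologicalClosure ⧸ N.subgroupOf (H ⊔ N).topologicalClosure),
      Continuous φ ∧ Continuous φ.symm ∧
        ∀ h : H, φ (QuotientGroup.mk h) =
          QuotientGroup.mk
            (⟨(h : G), (H ⊔ N).le_topologicalClosure (Subgroup.mem_sup_left h.2)⟩ :
              (H ⊔ N).topologicalClosure) := by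
  have hHK : H ≤ (H ⊔ N).topologicalClosure := le_sup_left.trans (H ⊔ N).le_topologicalClosure
  have hHN : IsClosed ((H ⊔ N : Subgroup G) : Set G) := by
    rw [Subgroup.mul_normal]
    exact hcl H le_rfl hH fun f hf n hn => H.mul_mem hf hn.1
  have hKHN : (H ⊔ N).topologicalClosure ≤ H ⊔ N := (H ⊔ N).topologicalClosure_minimal le_rfl hHN
  let φ := MulEquiv.ofBijective _ ⟨QuotientGroup.quotientMapSubgroupOfOfLe_injective hHK,
    QuotientGroup.quotientMapSubgroupOfOfLe_surjective hHK hKHN⟩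
  have hφ : Continuous φ := QuotientGroup.continuous_quotientMapSubgroupOfOfLe hHK
  refine ⟨φ, hφ, ?_, fun _ => rfl⟩
  exact (φ.toEquiv.toHomeomorphOfContinuousClosed hφ
    (QuotientGroup.isClosedMap_quotientMapSubgroupOfOfLe hHK hH hcl)).symm.continuous

/-- If for every closed subset `F ⊆ H` invariant under right multiplication by `H ∩ N`
the product `F * N` is closed, then the canonical map `H/(H ∩ N) → cl(HN)/N`
is a topological group isomorphism. -/
theorem second_iso_topological_of_closed_products
    {G : Type*} [Group G] [TopologicalSpace G] [IsTopologicalGroup G]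
    [LocallyCompactSpace G] [T2Space G]
    (H N : Subgroup G) [N.Normal] (hH : IsClosed (H : Set G)) (hN : IsClosed (N : Set G))
    (hcl : ∀ F : Set G, F ⊆ (H : Set G) → IsClosed F →
      (∀ f ∈ F, ∀ n ∈ H ⊓ N, f * n ∈ F) → IsClosed (F * (N : Set G))) :
    ∃ φ : (H ⧸ N.subgroupOf H) ≃*
        ((H ⊔ N).topologicalClosure ⧸ N.subgroupOf (H ⊔ N).topologicalClosure),
      Continuous φ ∧ Continuous φ.symm ∧
        ∀ h : H, φ (QuotientGroup.mk h) =
          QuotientGroup.mk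
            (⟨(h : G), (H ⊔ N).le_topologicalClosure (Subgroup.mem_sup_left h.2)⟩ :
              (H ⊔ N).topologicalClosure) :=
  second_iso_topological_of_closed_products_general H N hH hcl
end

section
/- Let G be a topological group, H ≤ G a closed subgroup and N ⊴ G a closed normal subgroup, and suppose the canonical map H/(H∩N) → cl(HN)/N is a topological isomorphism. Then HN is closed in G (so cl(HN) = HN), and for every closed (H∩N)-invariant subset F ⊆ H the set FN is closed in G. -/
/-! With `K = cl(HN)`, the set `FN` is the image in `G` of the preimage under `K → K/N` of the
image of `F/(H∩N)` under the canonical map `H/(H∩N) → K/N`. Since `F` is `(H∩N)`-saturated,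
`F/(H∩N)` is closed; the canonical map is closed because its inverse is continuous; and `K` is
closed in `G`. Taking `F = H` shows that `HN` is closed. -/

open Pointwise

namespace QuotientGroup

variable {G : Type*} [Group G] [TopologicalSpace G]

theorem isClosed_image_mk_of_mul_mem {S : Subgroup G} {s : Set G} (hs : IsClosed s)
    (hsS : ∀ x ∈ s, ∀ y ∈ S, x * y ∈ s) : IsClosed (mk '' s : Set (G ⧸ S)) := by
  have hsat : s * S = s := (Set.mul_subset_iff.2 hsS).antisymm (Set.subset_mul_left s S.one_mem)
  rwa [← (isQuotientMap_mk S).isClosed_preimage, preimage_image_mk_eq_mul, hsat]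

theorem isClosed_image_subtype_mul_of_isClosed_image_mk {K N : Subgroup G}
    (hK : IsClosed (K : Set G)) (hNK : N ≤ K) {T : Set K}
    (hT : IsClosed (mk '' T : Set (K ⧸ N.subgroupOf K))) :
    IsClosed (((↑) : K → G) '' T * (N : Set G)) := by
  have hpreimage : ((↑) : K → G) '' T * (N : Set G) =
      ((↑) : K → G) '' (mk ⁻¹' (mk '' T : Set (K ⧸ N.subgroupOf K))) := by
    rw [preimage_image_mk_eq_mul, ← K.coe_subtype, Set.image_mul, ← Subgroup.coe_map,
      Subgroup.map_subgroupOf_eq_of_le hNK]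
  rw [hpreimage]
  exact hK.isClosedEmbedding_subtypeVal.isClosedMap _ (hT.preimage continuous_quotient_mk')

theorem isClosed_mul_of_isClosedMap_quotientInclusion {H K N : Subgroup G} (hHK : H ≤ K)
    (hK : IsClosed (K : Set G)) (hNK : N ≤ K)
    {f : H ⧸ N.subgroupOf H → K ⧸ N.subgroupOf K} (hf : IsClosedMap f)
    (hf_mk : ∀ h : H, f (mk h) = mk (Subgroup.inclusion hHK h))
    {F : Set G} (hFH : F ⊆ H) (hF : IsClosed F)
    (hFN : ∀ x ∈ F, ∀ n ∈ H ⊓ N, x * n ∈ F) :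
    IsClosed (F * (N : Set G)) := by
  set F' : Set H := (↑) ⁻¹' F
  have hF' : IsClosed (mk '' F' : Set (H ⧸ N.subgroupOf H)) :=
    isClosed_image_mk_of_mul_mem (hF.preimage continuous_subtype_val)
      fun x hx y hy => hFN x hx y ⟨y.2, Subgroup.mem_subgroupOf.1 hy⟩
  have himage : (mk '' (Subgroup.inclusion hHK '' F') : Set (K ⧸ N.subgroupOf K)) =
      f '' (mk '' F') := by
    simp only [Set.image_image, hf_mk]
  have hcoe : ((↑) : K → G) '' (Subgroup.inclusion hHK '' F') = F := by
    rw [Set.image_image]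
    exact (Subtype.image_preimage_coe _ F).trans (Set.inter_eq_right.2 hFH)
  rw [← hcoe]
  exact isClosed_image_subtype_mul_of_isClosed_image_mk hK hNK (himage ▸ hf _ hF')

end QuotientGroup

theorem closed_products_of_second_iso_topological_general
    {G : Type*} [Group G] [TopologicalSpace G] [IsTopologicalGroup G]
    (H N : Subgroup G) [N.Normal] (hH : IsClosed (H : Set G))
    (φ : (H ⧸ N.subgroupOf H) ≃*
        ((H ⊔ N).topologicalClosure ⧸ N.subgroupOf (H ⊔ N).topologicalClosure))
    (hφ' : Continuous φ.symm)
    (hcanon : ∀ h : H, φ (QuotientGroup.mk h) =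
      QuotientGroup.mk
        (⟨(h : G), (H ⊔ N).le_topologicalClosure (Subgroup.mem_sup_left h.2)⟩ :
          (H ⊔ N).topologicalClosure)) :
    IsClosed ((H : Set G) * (N : Set G)) ∧
      ∀ F : Set G, F ⊆ (H : Set G) → IsClosed F →
        (∀ f ∈ F, ∀ n ∈ H ⊓ N, f * n ∈ F) → IsClosed (F * (N : Set G)) := by
  have hφ_closed : IsClosedMap φ :=
    IsClosedMap.of_inverse hφ' φ.apply_symm_apply φ.symm_apply_apply
  have hF : ∀ F : Set G, F ⊆ (H : Set G) → IsClosed F →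
      (∀ f ∈ F, ∀ n ∈ H ⊓ N, f * n ∈ F) → IsClosed (F * (N : Set G)) := fun _ =>
    QuotientGroup.isClosed_mul_of_isClosedMap_quotientInclusion
      (le_sup_left.trans (H ⊔ N).le_topologicalClosure) (H ⊔ N).isClosed_topologicalClosure
      (le_sup_right.trans (H ⊔ N).le_topologicalClosure) hφ_closed hcanon
  exact ⟨hF H subset_rfl hH fun _ hf _ hn => mul_mem hf hn.1, hF⟩

/-- If the canonical map `H/(H ∩ N) → cl(HN)/N` is a topological group isomorphism,
then `HN` is closed in `G` and for every closed `(H ∩ N)`-invariant subset `F ⊆ H`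
the product `F * N` is closed in `G`. -/
theorem closed_products_of_second_iso_topological
    {G : Type*} [Group G] [TopologicalSpace G] [IsTopologicalGroup G]
    [LocallyCompactSpace G] [T2Space G]
    (H N : Subgroup G) [N.Normal] (hH : IsClosed (H : Set G)) (hN : IsClosed (N : Set G))
    (φ : (H ⧸ N.subgroupOf H) ≃*
        ((H ⊔ N).topologicalClosure ⧸ N.subgroupOf (H ⊔ N).topologicalClosure))
    (hφ : Continuous φ) (hφ' : Continuous φ.symm)
    (hcanon : ∀ h : H, φ (QuotientGroup.mk h) =
      QuotientGroup.mk
        (⟨(h : G), (H ⊔ N).le_topologicalClosure (Subgroup.mem_sup_left h.2)⟩ :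
          (H ⊔ N).topologicalClosure)) :
    IsClosed ((H : Set G) * (N : Set G)) ∧
      ∀ F : Set G, F ⊆ (H : Set G) → IsClosed F →
        (∀ f ∈ F, ∀ n ∈ H ⊓ N, f * n ∈ F) → IsClosed (F * (N : Set G)) :=
  closed_products_of_second_iso_topological_general H N hH φ hφ' hcanon
end

section
/- In the topological group G = T² × ℝ (torus times reals), fix real numbers θ, φ that are linearly independent over ℚ. Let H = {(e^{itθ}, 1, t) : t ∈ ℝ} and N = {(1, e^{isφ}, s) : s ∈ ℝ}. Then the closure of the product set HN contains T² × {0}, and hence the closed subgroup generated by H and N is all of G. -/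
open Real

/-- A subgroup of `ℝ` generated by two rationally independent elements is dense. -/
lemma dense_zmult_sup {a b : ℝ} (ha : a ≠ 0)
    (h : ∀ m n : ℤ, m * a + n * b = 0 → m = 0 ∧ n = 0) :
    Dense ((AddSubgroup.zmultiples a ⊔ AddSubgroup.zmultiples b : AddSubgroup ℝ) : Set ℝ) := by
  rcases AddSubgroup.dense_or_cyclic (AddSubgroup.zmultiples a ⊔ AddSubgroup.zmultiples b)
    with hd | ⟨g, hg⟩
  · exact hd
  · exfalso
    have haS : a ∈ AddSubgroup.closure ({g} : Set ℝ) := by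
      rw [← hg]; exact le_sup_left (α := AddSubgroup ℝ) (AddSubgroup.mem_zmultiples a)
    have hbS : b ∈ AddSubgroup.closure ({g} : Set ℝ) := by
      rw [← hg]; exact le_sup_right (α := AddSubgroup ℝ) (AddSubgroup.mem_zmultiples b)
    rw [AddSubgroup.mem_closure_singleton] at haS hbS
    obtain ⟨m, hm⟩ := haS
    obtain ⟨n, hn⟩ := hbS
    have key : (n : ℝ) * a + (-m : ℤ) * b = 0 := by
      rw [← hm, ← hn, zsmul_eq_mul, zsmul_eq_mul]; push_cast; ring
    obtain ⟨hn0, hm0⟩ := h n (-m) key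
    apply ha
    rw [← hm]
    have : m = 0 := by omega
    simp [this]

/-- Orbit of an "irrational rotation" is dense in the circle. -/
lemma dense_exp_int_mul {c : ℝ}
    (h : ∀ m n : ℤ, m * (2 * π) + n * c = 0 → m = 0 ∧ n = 0) (u : Circle) :
    u ∈ closure (Set.range fun k : ℤ => Circle.exp (k * c)) := by
  have h2π : (2 * π : ℝ) ≠ 0 := by positivity
  have hd := dense_zmult_sup h2π h
  have hx : Circle.exp (Complex.arg u) = u := Circle.exp_arg u
  have hmem : (Complex.arg u : ℝ) ∈
      closure ((AddSubgroup.zmultiples (2 * π) ⊔ AddSubgroup.zmultiples c : AddSubgroup ℝ) :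
        Set ℝ) := hd _
  have := mem_closure_image (Circle.exp.continuous.continuousAt) hmem
  rw [hx] at this
  refine closure_mono ?_ this
  rintro _ ⟨r, hr, rfl⟩
  rw [SetLike.mem_coe, AddSubgroup.mem_sup] at hr
  obtain ⟨p, hp, q, hq, rfl⟩ := hr
  obtain ⟨m, rfl⟩ := AddSubgroup.mem_zmultiples_iff.1 hp
  obtain ⟨n, rfl⟩ := AddSubgroup.mem_zmultiples_iff.1 hq
  refine ⟨n, ?_⟩
  rw [zsmul_eq_mul, zsmul_eq_mul, Circle.exp_add, Circle.exp_int_mul_two_pi, one_mul]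


open Pointwise

/-- In `G = T² × ℝ`, with `θ, φ` linearly independent over `ℚ`,
the closure of the product of the one-parameter subgroups
`H = {(e^{itθ}, 1, t)}` and `N = {(1, e^{isφ}, s)}` contains `T² × {0}`,
and the closed subgroup generated by `H` and `N` is all of `G`. -/
theorem closure_of_product_of_winding_lines (θ φ : ℝ)
    (hind : LinearIndependent ℚ ![θ, φ]) :
    let G := Circle × Circle × Multiplicative ℝ
    let SH : Set G := {p | ∃ t : ℝ, p = (Circle.exp (t * θ), 1, Multiplicative.ofAdd t)}
    let SN : Set G := {p | ∃ s : ℝ, p = (1, Circle.exp (s * φ), Multiplicative.ofAdd s)}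
    (∀ z w : Circle, ((z, w, Multiplicative.ofAdd (0 : ℝ)) : G) ∈ closure (SH * SN)) ∧
      (Subgroup.closure (SH ∪ SN)).topologicalClosure = ⊤ := by
  intro G SH SN
  -- integer linear independence
  have hZ : ∀ m n : ℤ, m * θ + n * φ = 0 → m = 0 ∧ n = 0 := by
    intro m n hmn
    have := LinearIndependent.pair_iff.1 hind (m : ℚ) (n : ℚ) ?_
    · exact ⟨by exact_mod_cast this.1, by exact_mod_cast this.2⟩
    · rw [Rat.smul_def, Rat.smul_def]; push_cast; exact hmn
  have hθ : θ ≠ 0 := by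
    intro h0
    have := (hZ 1 0 (by simp [h0])).1
    omega
  have h2π : (2 * π : ℝ) ≠ 0 := by positivity
  -- the winding line in the torus
  set f : ℝ → Circle × Circle := fun t => (Circle.exp (t * θ), Circle.exp ((-t) * φ)) with hf
  obtain ⟨c, hcθ⟩ : ∃ c : ℝ, c * θ = -(2 * π * φ) := ⟨-(2 * π * φ / θ), by field_simp⟩
  have hcval : c = -(2 * π * φ) / θ := by rw [eq_div_iff hθ]; exact hcθ
  have hcirr : ∀ m n : ℤ, m * (2 * π) + n * c = 0 → m = 0 ∧ n = 0 := by
    intro m n hmn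
    have h3 : (m : ℝ) * (2 * π) * θ + (n : ℝ) * -(2 * π * φ) = 0 := by
      linear_combination θ * hmn - (n : ℝ) * hcθ
    have h4 : (2 * π) * ((m : ℝ) * θ - (n : ℝ) * φ) = 0 := by linear_combination h3
    have h5 := (mul_eq_zero.1 h4).resolve_left h2π
    have h6 : (m : ℝ) * θ + ((-n : ℤ) : ℝ) * φ = 0 := by push_cast; linarith
    obtain ⟨ha, hb⟩ := hZ m (-n) h6
    exact ⟨ha, by omega⟩
  -- step 1: the vertical fiber is in the closure of the range of f
  have step1 : ∀ u : Circle, ((1, u) : Circle × Circle) ∈ closure (Set.range f) := by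
    intro u
    have hu := dense_exp_int_mul hcirr u
    have hcont : Continuous fun v : Circle => ((1, v) : Circle × Circle) := by fun_prop
    have := mem_closure_image hcont.continuousAt hu
    refine closure_mono ?_ this
    rintro _ ⟨_, ⟨k, rfl⟩, rfl⟩
    refine ⟨(k : ℝ) * (2 * π) / θ, ?_⟩
    have e1 : (k : ℝ) * (2 * π) / θ * θ = (k : ℝ) * (2 * π) := div_mul_cancel₀ _ hθ
    have e2 : -((k : ℝ) * (2 * π) / θ) * φ = (k : ℝ) * c := by rw [hcval]; ring
    show (Circle.exp ((k : ℝ) * (2 * π) / θ * θ),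
        Circle.exp (-((k : ℝ) * (2 * π) / θ) * φ)) = (1, Circle.exp ((k : ℝ) * c))
    rw [e1, e2, Circle.exp_int_mul_two_pi]
  -- step 2: f has dense range
  have step2 : ∀ z w : Circle, ((z, w) : Circle × Circle) ∈ closure (Set.range f) := by
    intro z w
    set t : ℝ := Complex.arg z / θ with ht
    have hz : Circle.exp (t * θ) = z := by
      rw [ht, div_mul_cancel₀ _ hθ, Circle.exp_arg]
    set u : Circle := (Circle.exp ((-t) * φ))⁻¹ * w with hu
    have h1u := step1 u
    have hcont : Continuous fun p : Circle × Circle => f t * p := by fun_prop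
    have hkey := mem_closure_image hcont.continuousAt h1u
    have heq : f t * ((1 : Circle), u) = (z, w) := by
      show (Circle.exp (t * θ), Circle.exp ((-t) * φ)) * ((1 : Circle), u) = (z, w)
      rw [hu, Prod.mk_mul_mk, mul_one, hz, mul_inv_cancel_left]
    rw [heq] at hkey
    refine closure_mono ?_ hkey
    rintro _ ⟨_, ⟨s, rfl⟩, rfl⟩
    refine ⟨t + s, ?_⟩
    have e1 : (t + s) * θ = t * θ + s * θ := by ring
    have e2 : (-(t + s)) * φ = (-t) * φ + (-s) * φ := by ring
    show (Circle.exp ((t + s) * θ), Circle.exp ((-(t + s)) * φ)) =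
      (Circle.exp (t * θ), Circle.exp ((-t) * φ)) *
        (Circle.exp (s * θ), Circle.exp ((-s) * φ))
    rw [e1, e2, Circle.exp_add, Circle.exp_add, Prod.mk_mul_mk]
  -- part 1
  have part1 : ∀ z w : Circle,
      ((z, w, Multiplicative.ofAdd (0 : ℝ)) : G) ∈ closure (SH * SN) := by
    intro z w
    have hcont : Continuous fun p : Circle × Circle =>
        ((p.1, p.2, Multiplicative.ofAdd (0 : ℝ)) : G) := by fun_prop
    have := mem_closure_image hcont.continuousAt (step2 z w)
    refine closure_mono ?_ this
    rintro _ ⟨_, ⟨t, rfl⟩, rfl⟩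
    refine Set.mem_mul.2 ⟨(Circle.exp (t * θ), 1, Multiplicative.ofAdd t), ⟨t, rfl⟩,
      (1, Circle.exp ((-t) * φ), Multiplicative.ofAdd (-t)), ⟨-t, rfl⟩, ?_⟩
    show (Circle.exp (t * θ), 1, Multiplicative.ofAdd t) *
        (1, Circle.exp ((-t) * φ), Multiplicative.ofAdd (-t)) =
      (Circle.exp (t * θ), Circle.exp ((-t) * φ), Multiplicative.ofAdd (0 : ℝ))
    rw [Prod.mk_mul_mk, Prod.mk_mul_mk, mul_one, one_mul, ← ofAdd_add, add_neg_cancel]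
  refine ⟨part1, ?_⟩
  -- part 2
  rw [eq_top_iff]
  rintro ⟨z, w, x⟩ -
  set r : ℝ := Multiplicative.toAdd x with hr
  have hsub : SH * SN ⊆ (Subgroup.closure (SH ∪ SN) : Set G) := by
    rintro _ ⟨p, hp, q, hq, rfl⟩
    exact mul_mem (Subgroup.subset_closure (Or.inl hp)) (Subgroup.subset_closure (Or.inr hq))
  have ha : ((z * (Circle.exp (r * θ))⁻¹, w, Multiplicative.ofAdd (0 : ℝ)) : G) ∈
      (Subgroup.closure (SH ∪ SN)).topologicalClosure :=
    closure_mono hsub (part1 _ _)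
  have hb : ((Circle.exp (r * θ), 1, Multiplicative.ofAdd r) : G) ∈
      (Subgroup.closure (SH ∪ SN)).topologicalClosure :=
    Subgroup.le_topologicalClosure _ (Subgroup.subset_closure (Or.inl ⟨r, rfl⟩))
  have heq : ((z, w, x) : G) =
      (z * (Circle.exp (r * θ))⁻¹, w, Multiplicative.ofAdd (0 : ℝ)) *
        (Circle.exp (r * θ), 1, Multiplicative.ofAdd r) := by
    rw [Prod.mk_mul_mk, Prod.mk_mul_mk, inv_mul_cancel_right, mul_one, ← ofAdd_add,
      zero_add, hr, ofAdd_toAdd]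
  rw [heq]
  exact mul_mem ha hb
end

section
/- Let p be a prime and let G = ℤ_p × Γ where ℤ_p is the additive group of p-adic integers with its usual compact topology and Γ is ℤ_p equipped with the discrete topology. Let H = {(g,g) : g ∈ ℤ_p} (diagonal) and N = {(g,−g) : g ∈ ℤ_p} (antidiagonal). If p is odd, then H ∩ N = {0}, H + N = G as abstract groups, and both H and N are closed discrete subgroups of G, while G is not discrete. -/
/-- `ℤ_p` with the discrete topology. -/
def PadicDiscrete (p : ℕ) [Fact p.Prime] : Type := ℤ_[p]

noncomputable instance (p : ℕ) [Fact p.Prime] : AddCommGroup (PadicDiscrete p) :=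
  inferInstanceAs (AddCommGroup ℤ_[p])

instance (p : ℕ) [Fact p.Prime] : TopologicalSpace (PadicDiscrete p) := ⊥

instance (p : ℕ) [Fact p.Prime] : DiscreteTopology (PadicDiscrete p) := ⟨rfl⟩

/-- The identity of `ℤ_p`, viewed as a homomorphism to the discrete copy. -/
noncomputable def toPadicDiscrete (p : ℕ) [Fact p.Prime] : ℤ_[p] →+ PadicDiscrete p where
  toFun x := x
  map_zero' := rfl
  map_add' _ _ := rfl

/-!
`H` and `N` are the graphs of the bijections `x ↦ x` and `x ↦ -x` from `ℤ_p` onto the discrete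
`Γ`. Such a graph projects injectively onto the discrete factor, so it is discrete, and it is closed
because it is also the graph of the inverse map `Γ → ℤ_p`, continuous because `Γ` is discrete.
Algebraically, `(x, x) = (y, -y)` forces `2x = 0`, and
`(a, b) = ((a + b)/2, (a + b)/2) + ((a - b)/2, -(a - b)/2)`: both need `2` to be a unit, i.e. `p` odd.
Finally `G` is not discrete since its factor `ℤ_p` is compact and infinite.
-/

open Function

namespace AddMonoidHom

variable {A B : Type*} [AddCommGroup A] [AddCommGroup B] (f : A →+ B)

theorem range_prod_inf_range_prod_comp_neg (hf : Injective f)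
    (h2 : Injective fun a : A => 2 • a) :
    ((AddMonoidHom.id A).prod f).range ⊓
      ((AddMonoidHom.id A).prod (f.comp (negAddMonoidHom (α := A)))).range = ⊥ := by
  rw [eq_bot_iff]
  rintro _ ⟨⟨x, rfl⟩, y, hy⟩
  obtain rfl : y = x := congrArg Prod.fst hy
  have hneg : -y = y := hf (congrArg Prod.snd hy)
  have hy0 : 2 • y = 2 • 0 := by
    rw [two_nsmul, smul_zero, ← neg_eq_iff_add_eq_zero, hneg]
  simp [h2 hy0]

theorem range_prod_sup_range_prod_comp_neg (hf : Surjective f)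
    (h2 : Surjective fun a : A => 2 • a) :
    ((AddMonoidHom.id A).prod f).range ⊔
      ((AddMonoidHom.id A).prod (f.comp (negAddMonoidHom (α := A)))).range = ⊤ := by
  rw [eq_top_iff]
  rintro ⟨a, b⟩ -
  obtain ⟨c, rfl⟩ := hf b
  obtain ⟨x, hx : 2 • x = a + c⟩ := h2 (a + c)
  have hsum : ((a, f c) : A × B) = (x, f x) + (x - c, f (-(x - c))) := by
    rw [two_nsmul] at hx
    rw [Prod.mk_add_mk, ← map_add, Prod.mk.injEq]
    constructor
    · rw [← add_sub_assoc, hx, add_sub_cancel_right]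
    · congr 1
      abel
  rw [hsum]
  exact AddSubgroup.add_mem_sup ⟨x, rfl⟩ ⟨x - c, rfl⟩

end AddMonoidHom

section Graph

variable {X Y : Type*} [TopologicalSpace X] [TopologicalSpace Y] [DiscreteTopology Y] {f : X → Y}

theorem discreteTopology_range_prodMk (hf : Injective f) :
    DiscreteTopology (Set.range fun x => (x, f x)) := by
  refine .of_continuous_injective (f := fun q => q.1.2) (by fun_prop) ?_
  rintro ⟨_, x, rfl⟩ ⟨_, y, rfl⟩ h
  simp [hf h]

theorem isClosed_range_prodMk [T2Space X] (hf : Bijective f) :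
    IsClosed (Set.range fun x => (x, f x)) := by
  let e := Equiv.ofBijective f hf
  have : (Set.range fun x => (x, f x)) = {q : X × Y | q.1 = e.symm q.2} := by
    ext ⟨x, y⟩
    simp [e.eq_symm_apply, e, eq_comm]
  rw [this]
  exact isClosed_eq continuous_fst (continuous_of_discreteTopology.comp continuous_snd)

end Graph

theorem not_discreteTopology_prod {X Y : Type*} [TopologicalSpace X] [TopologicalSpace Y]
    [CompactSpace X] [Infinite X] [Nonempty Y] : ¬ DiscreteTopology (X × Y) := by
  intro
  have := (isEmbedding_prodMkLeft (X := X) (Classical.arbitrary Y)).discreteTopology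
  have := finite_of_compact_of_discrete (X := X)
  exact not_finite X

namespace PadicInt

variable {p : ℕ} [Fact p.Prime]

theorem isUnit_two (hp : p ≠ 2) : IsUnit (2 : ℤ_[p]) := by
  rw [isUnit_iff, ← Nat.cast_ofNat, norm_natCast_eq_one_iff]
  exact (Nat.coprime_primes Fact.out Nat.prime_two).mpr hp

theorem bijective_two_nsmul (hp : p ≠ 2) : Bijective fun x : ℤ_[p] => 2 • x := by
  simpa only [nsmul_eq_mul, Nat.cast_ofNat] using
    IsUnit.isUnit_iff_mulLeft_bijective.mp (isUnit_two hp)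

end PadicInt

theorem toPadicDiscrete_bijective (p : ℕ) [Fact p.Prime] : Bijective (toPadicDiscrete p) :=
  bijective_id

/-- In `G = ℤ_p × Γ` (`Γ` a discrete copy of `ℤ_p`), for odd `p`, the diagonal `H` and
antidiagonal `N` satisfy `H ∩ N = 0`, `H + N = G`, both are closed discrete subgroups,
but `G` is not discrete. -/
theorem padic_diagonal_antidiagonal (p : ℕ) [Fact p.Prime] (hp : p ≠ 2) :
    let G := ℤ_[p] × PadicDiscrete p
    let H : AddSubgroup G :=
      ((AddMonoidHom.id ℤ_[p]).prod (toPadicDiscrete p)).range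
    let N : AddSubgroup G :=
      ((AddMonoidHom.id ℤ_[p]).prod ((toPadicDiscrete p).comp (negAddMonoidHom (α := ℤ_[p])))).range
    H ⊓ N = ⊥ ∧ H ⊔ N = ⊤ ∧
      IsClosed (H : Set G) ∧ IsClosed (N : Set G) ∧
      DiscreteTopology H ∧ DiscreteTopology N ∧
      ¬ DiscreteTopology G := by
  intro G H N
  have hdiag := toPadicDiscrete_bijective p
  have hanti : Bijective ((toPadicDiscrete p).comp negAddMonoidHom) := hdiag.comp neg_bijective
  have hdouble := PadicInt.bijective_two_nsmul hp
  exact ⟨AddMonoidHom.range_prod_inf_range_prod_comp_neg _ hdiag.1 hdouble.1,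
    AddMonoidHom.range_prod_sup_range_prod_comp_neg _ hdiag.2 hdouble.2,
    isClosed_range_prodMk hdiag, isClosed_range_prodMk hanti,
    discreteTopology_range_prodMk hdiag.1, discreteTopology_range_prodMk hanti.1,
    not_discreteTopology_prod⟩
end
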